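/- Let n ≥ r ≥ 1. The function d(x,y) = min_{U ∈ U(r)} ‖x − y U‖₂ · ‖x + y U‖₂ on ℂ^{n×r} × ℂ^{n×r} is nonnegative, symmetric, satisfies the triangle inequality d(x,y) ≤ d(x,z) + d(z,y) for all x,y,z ∈ ℂ^{n×r}, and d(x,y) = 0 if and only if there exists U ∈ U(r) with x = y U. Hence d is a metric on the quotient ℂ^{n×r}/U(r). -/

import Mathlib

open Matrix Filter
open scoped ComplexOrder

/-- The square root of a positive semidefinite matrix, as defined in Mathlib (Dec 2024);
removed from current Mathlib. -/
noncomputable def Matrix.PosSemidef.sqrt {n : Type*} [Fintype n] [DecidableEq n] {𝕜 : Type*}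
    [RCLike 𝕜] {A : Matrix n n 𝕜} (hA : A.PosSemidef) : Matrix n n 𝕜 :=
  hA.1.eigenvectorUnitary.1 * diagonal ((↑) ∘ Real.sqrt ∘ hA.1.eigenvalues) *
  (star hA.1.eigenvectorUnitary : Matrix n n 𝕜)

noncomputable def frob {p q : ℕ} (x : Matrix (Fin p) (Fin q) ℂ) : ℝ :=
  Real.sqrt (Matrix.trace (xᴴ * x)).re

noncomputable def rinner {p q : ℕ} (X Y : Matrix (Fin p) (Fin q) ℂ) : ℝ :=
  (Matrix.trace (Xᴴ * Y)).re

noncomputable def nuclear {p q : ℕ} (x : Matrix (Fin p) (Fin q) ℂ) : ℝ :=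
  (Matrix.trace (Matrix.posSemidef_conjTranspose_mul_self x).sqrt).re

noncomputable def theta {n r : ℕ} (x : Matrix (Fin n) (Fin r) ℂ) : Matrix (Fin n) (Fin n) ℂ :=
  (Matrix.posSemidef_self_mul_conjTranspose x).sqrt

noncomputable def psi {n r : ℕ} (x : Matrix (Fin n) (Fin r) ℂ) : Matrix (Fin n) (Fin n) ℂ :=
  frob x • theta x

noncomputable def Dmet {n r : ℕ} (x y : Matrix (Fin n) (Fin r) ℂ) : ℝ :=
  ⨅ U : Matrix.unitaryGroup (Fin r) ℂ, frob (x - y * (U : Matrix (Fin r) (Fin r) ℂ))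

noncomputable def dmet {n r : ℕ} (x y : Matrix (Fin n) (Fin r) ℂ) : ℝ :=
  ⨅ U : Matrix.unitaryGroup (Fin r) ℂ,
    frob (x - y * (U : Matrix (Fin r) (Fin r) ℂ)) * frob (x + y * (U : Matrix (Fin r) (Fin r) ℂ))

/-!
The minimum over `U(r)` is attained because `U(r)` is compact. Symmetry comes from
`‖x - yU‖ = ‖y - xU*‖`, and `d(x, y) = 0` exactly when `x = ±yU`. For the triangle inequality take
minimisers `U` for `(x, z)` and `V` for `(z, y)` and test `d(x, y)` at `VU`. Since right
multiplication by `U` is an isometry, with `y' = yVU` and `z' = zU` what remains is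
`‖x - y'‖‖x + y'‖ ≤ ‖x - z'‖‖x + z'‖ + ‖z' - y'‖‖z' + y'‖` in the Euclidean space `ℂ^{n×r}`, which is
Ptolemy's inequality for the points `0`, `x - z'`, `x - y'`, `-(z' + y')`.
-/

lemma norm_sub_mul_norm_add_le {V : Type*} [NormedAddCommGroup V] [InnerProductSpace ℝ V]
    (x y z : V) : ‖x - y‖ * ‖x + y‖ ≤ ‖x - z‖ * ‖x + z‖ + ‖z - y‖ * ‖z + y‖ := by
  have h := EuclideanGeometry.mul_dist_le_mul_dist_add_mul_dist (0 : V) (x - z) (x - y) (-(z + y))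
  have e₁ : x - z - -(z + y) = x + y := by abel
  have e₂ : x - y - -(z + y) = x + z := by abel
  have e₃ : x - z - (x - y) = y - z := by abel
  simpa only [dist_eq_norm, zero_sub, norm_neg, e₁, e₂, e₃, norm_sub_rev y z] using h

section Frobenius

variable {p q : ℕ}

lemma re_trace_conjTranspose_mul_self {m k : Type*} [Fintype m] [Fintype k]
    (x : Matrix m k ℂ) : (trace (xᴴ * x)).re = ∑ ij : m × k, ‖x ij.1 ij.2‖ ^ 2 := by
  simp only [trace, diag, mul_apply, conjTranspose_apply, Complex.re_sum, Fintype.sum_prod_type,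
    Complex.star_def, Complex.conj_mul']
  rw [Finset.sum_comm]
  norm_cast

def toEuclideanEntries : Matrix (Fin p) (Fin q) ℂ ≃ₗ[ℂ] EuclideanSpace ℂ (Fin p × Fin q) :=
  (LinearEquiv.curry ℂ ℂ (Fin p) (Fin q)).symm.trans (WithLp.linearEquiv 2 ℂ _).symm

lemma frob_eq_norm_toEuclideanEntries (x : Matrix (Fin p) (Fin q) ℂ) :
    frob x = ‖toEuclideanEntries x‖ := by
  rw [frob, EuclideanSpace.norm_eq, re_trace_conjTranspose_mul_self]
  rfl

lemma frob_nonneg (x : Matrix (Fin p) (Fin q) ℂ) : 0 ≤ frob x :=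
  Real.sqrt_nonneg _

lemma frob_eq_zero_iff {x : Matrix (Fin p) (Fin q) ℂ} : frob x = 0 ↔ x = 0 := by
  rw [frob_eq_norm_toEuclideanEntries, norm_eq_zero, LinearEquiv.map_eq_zero_iff]

lemma frob_neg (x : Matrix (Fin p) (Fin q) ℂ) : frob (-x) = frob x := by
  rw [frob_eq_norm_toEuclideanEntries, frob_eq_norm_toEuclideanEntries, map_neg, norm_neg]

@[fun_prop]
lemma continuous_frob : Continuous (frob : Matrix (Fin p) (Fin q) ℂ → ℝ) :=
  (continuous_norm.comp toEuclideanEntries.continuous_of_finiteDimensional).congr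
    fun x => (frob_eq_norm_toEuclideanEntries x).symm

lemma frob_mul_unitary (x : Matrix (Fin p) (Fin q) ℂ) {U : Matrix (Fin q) (Fin q) ℂ}
    (hU : U ∈ unitaryGroup (Fin q) ℂ) : frob (x * U) = frob x := by
  have hUU : U * Uᴴ = 1 := mem_unitaryGroup_iff.mp hU
  rw [frob, frob, conjTranspose_mul, Matrix.mul_assoc, trace_mul_comm, Matrix.mul_assoc,
    Matrix.mul_assoc, hUU, Matrix.mul_one]

end Frobenius

lemma isCompact_unitaryGroup (n : Type*) [Fintype n] [DecidableEq n] (𝕜 : Type*) [RCLike 𝕜] :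
    IsCompact (unitaryGroup n 𝕜 : Set (Matrix n n 𝕜)) := by
  have hclosed := isClosed_unitary (R := Matrix n n 𝕜)
  open scoped Matrix.Norms.Elementwise in
  exact Metric.isCompact_of_isClosed_isBounded hclosed
    (Metric.isBounded_closedBall.subset fun _ hU =>
      mem_closedBall_zero_iff.2 (entrywise_sup_norm_bound_of_unitary hU))

section Dmet

variable {n r : ℕ}

noncomputable def dmetAt (x y : Matrix (Fin n) (Fin r) ℂ) (U : Matrix (Fin r) (Fin r) ℂ) : ℝ :=
  frob (x - y * U) * frob (x + y * U)

lemma dmetAt_nonneg (x y : Matrix (Fin n) (Fin r) ℂ) (U : Matrix (Fin r) (Fin r) ℂ) :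
    0 ≤ dmetAt x y U :=
  mul_nonneg (frob_nonneg _) (frob_nonneg _)

lemma continuous_dmetAt (x y : Matrix (Fin n) (Fin r) ℂ) : Continuous (dmetAt x y) := by
  unfold dmetAt
  fun_prop

lemma dmetAt_star {x y : Matrix (Fin n) (Fin r) ℂ} {U : Matrix (Fin r) (Fin r) ℂ}
    (hU : U ∈ unitaryGroup (Fin r) ℂ) : dmetAt y x (star U) = dmetAt x y U := by
  have hUU : star U * U = 1 := mem_unitaryGroup_iff'.mp hU
  have hsub : (y - x * star U) * U = -(x - y * U) := by
    rw [Matrix.sub_mul, Matrix.mul_assoc, hUU, Matrix.mul_one, neg_sub]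
  have hadd : (y + x * star U) * U = x + y * U := by
    rw [Matrix.add_mul, Matrix.mul_assoc, hUU, Matrix.mul_one, add_comm]
  rw [dmetAt, dmetAt, ← frob_mul_unitary _ hU, hsub, frob_neg, ← frob_mul_unitary (y + _) hU, hadd]

lemma dmetAt_mul_le (x y z : Matrix (Fin n) (Fin r) ℂ) {U V : Matrix (Fin r) (Fin r) ℂ}
    (hU : U ∈ unitaryGroup (Fin r) ℂ) :
    dmetAt x y (V * U) ≤ dmetAt x z U + dmetAt z y V := by
  have h := norm_sub_mul_norm_add_le (toEuclideanEntries x) (toEuclideanEntries (y * (V * U)))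
    (toEuclideanEntries (z * U))
  simp only [← map_sub, ← map_add, ← frob_eq_norm_toEuclideanEntries] at h
  have hsub : z * U - y * (V * U) = (z - y * V) * U := by rw [Matrix.sub_mul, Matrix.mul_assoc]
  have hadd : z * U + y * (V * U) = (z + y * V) * U := by rw [Matrix.add_mul, Matrix.mul_assoc]
  rwa [hsub, hadd, frob_mul_unitary _ hU, frob_mul_unitary _ hU] at h

lemma dmetAt_eq_zero_iff {x y : Matrix (Fin n) (Fin r) ℂ} {U : Matrix (Fin r) (Fin r) ℂ} :
    dmetAt x y U = 0 ↔ x = y * U ∨ x = y * -U := by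
  rw [dmetAt, mul_eq_zero, frob_eq_zero_iff, frob_eq_zero_iff, sub_eq_zero, Matrix.mul_neg,
    add_eq_zero_iff_eq_neg]

lemma dmet_le_dmetAt (x y : Matrix (Fin n) (Fin r) ℂ) {U : Matrix (Fin r) (Fin r) ℂ}
    (hU : U ∈ unitaryGroup (Fin r) ℂ) : dmet x y ≤ dmetAt x y U := by
  have hbdd : BddBelow (Set.range fun V : unitaryGroup (Fin r) ℂ => dmetAt x y V) :=
    ⟨0, by rintro _ ⟨V, rfl⟩; exact dmetAt_nonneg x y V⟩
  exact ciInf_le hbdd ⟨U, hU⟩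

lemma exists_dmetAt_eq_dmet (x y : Matrix (Fin n) (Fin r) ℂ) :
    ∃ U ∈ unitaryGroup (Fin r) ℂ, dmetAt x y U = dmet x y := by
  obtain ⟨U, hU, hmin⟩ := (isCompact_unitaryGroup (Fin r) ℂ).exists_isMinOn ⟨1, one_mem _⟩
    (continuous_dmetAt x y).continuousOn
  exact ⟨U, hU, le_antisymm (le_ciInf fun V => hmin V.2) (dmet_le_dmetAt x y hU)⟩

lemma dmet_nonneg (x y : Matrix (Fin n) (Fin r) ℂ) : 0 ≤ dmet x y :=
  Real.iInf_nonneg fun _ => dmetAt_nonneg x y _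

lemma dmet_le_dmet_swap (x y : Matrix (Fin n) (Fin r) ℂ) : dmet y x ≤ dmet x y :=
  le_ciInf fun U => (dmet_le_dmetAt y x (Unitary.star_mem U.2)).trans_eq (dmetAt_star U.2)

lemma dmet_comm (x y : Matrix (Fin n) (Fin r) ℂ) : dmet x y = dmet y x :=
  le_antisymm (dmet_le_dmet_swap y x) (dmet_le_dmet_swap x y)

lemma dmet_triangle (x y z : Matrix (Fin n) (Fin r) ℂ) : dmet x y ≤ dmet x z + dmet z y := by
  obtain ⟨U, hU, hxz⟩ := exists_dmetAt_eq_dmet x z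
  obtain ⟨V, hV, hzy⟩ := exists_dmetAt_eq_dmet z y
  calc dmet x y ≤ dmetAt x y (V * U) := dmet_le_dmetAt x y (mul_mem hV hU)
    _ ≤ dmetAt x z U + dmetAt z y V := dmetAt_mul_le x y z hU
    _ = dmet x z + dmet z y := by rw [hxz, hzy]

lemma dmet_eq_zero_iff {x y : Matrix (Fin n) (Fin r) ℂ} :
    dmet x y = 0 ↔ ∃ U ∈ unitaryGroup (Fin r) ℂ, x = y * U := by
  constructor
  · intro h
    obtain ⟨U, hU, hmin⟩ := exists_dmetAt_eq_dmet x y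
    rcases dmetAt_eq_zero_iff.mp (hmin.trans h) with hx | hx
    · exact ⟨U, hU, hx⟩
    · refine ⟨-U, ?_, hx⟩
      rw [mem_unitaryGroup_iff, star_neg, neg_mul_neg]
      exact mem_unitaryGroup_iff.mp hU
  · rintro ⟨U, hU, hx⟩
    refine le_antisymm ?_ (dmet_nonneg x y)
    exact (dmet_le_dmetAt x y hU).trans_eq (dmetAt_eq_zero_iff.mpr (Or.inl hx))

end Dmet

theorem dmet_is_metric_general (n r : ℕ) :
    (∀ x y : Matrix (Fin n) (Fin r) ℂ, 0 ≤ dmet x y) ∧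
    (∀ x y : Matrix (Fin n) (Fin r) ℂ, dmet x y = dmet y x) ∧
    (∀ x y z : Matrix (Fin n) (Fin r) ℂ, dmet x y ≤ dmet x z + dmet z y) ∧
    (∀ x y : Matrix (Fin n) (Fin r) ℂ,
      dmet x y = 0 ↔ ∃ U ∈ Matrix.unitaryGroup (Fin r) ℂ, x = y * U) :=
  ⟨dmet_nonneg, dmet_comm, dmet_triangle, fun _ _ => dmet_eq_zero_iff⟩

/-- `d(x,y) = min_{U ∈ U(r)} ‖x − y U‖₂ ‖x + y U‖₂` is nonnegative, symmetric,
satisfies the triangle inequality, and vanishes exactly on `U(r)`-orbits;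
hence it is a metric on `ℂ^{n×r}/U(r)`. -/
theorem dmet_is_metric (n r : ℕ) (hr : 1 ≤ r) (hnr : r ≤ n) :
    (∀ x y : Matrix (Fin n) (Fin r) ℂ, 0 ≤ dmet x y) ∧
    (∀ x y : Matrix (Fin n) (Fin r) ℂ, dmet x y = dmet y x) ∧
    (∀ x y z : Matrix (Fin n) (Fin r) ℂ, dmet x y ≤ dmet x z + dmet z y) ∧
    (∀ x y : Matrix (Fin n) (Fin r) ℂ,
      dmet x y = 0 ↔ ∃ U ∈ Matrix.unitaryGroup (Fin r) ℂ, x = y * U) :=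
  dmet_is_metric_general n r
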